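/- If c = (c_1,...,c_n) is a representative of a quiddity cycle, then either c is one of the sequences (0,0), (1,1,1), (1,2,1,2), (2,1,2,1), (2,1,3,1,2), or one of the (non-cyclic) sequences (c_2,...,c_{n−1}) or (c_{n−1},...,c_2) contains, as a consecutive subsequence, one of the nine sequences (1,2,2), (1,2,3), (1,2,4), (2,1,3), (2,1,4), (2,1,5), (3,1,4), (3,1,5), (1,3,1,3). -/

import Mathlib

/-!
Every edge of a triangulated polygon lies in a triangle. For the closing edge `(cₙ, c₁)` this
says that a quiddity cycle `c` of length at least three is glued from two smaller quiddity
cycles `u` and `v` along a triangle with apex `cₖ`, and the middle `(c₂, …, cₙ₋₁)` of `c` is the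
middle of `u`, then `cₖ`, then the middle of `v`. By induction `u` and `v` are exceptional or
have a pattern in their middle; a pattern persists in `c`, and the 25 gluings of two exceptional
cycles are checked by evaluation. The gluing is found for all rotations of `c` at once, by
induction on the generation of `c`: a growth step away from the closing edge happens inside one
of the two pieces, and a growth step at the closing edge is itself a gluing with `(0, 0)`.
-/

/-- One generating move of the dihedral action on finite sequences:
cyclic rotation by one, or reversal. -/
def dihStep (c d : List ℕ) : Prop := d = c.rotate 1 ∨ d = c.reverse

/-- The equivalence relation on finite sequences generated by cyclic
rotations and reversal (the dihedral group action). -/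
def DihEquiv : List ℕ → List ℕ → Prop := Relation.EqvGen dihStep

/-- The lists that are representatives of quiddity cycles: the smallest
dihedrally closed collection containing `(0,0)` and closed under the rule
`(c₁,…,cₙ) ↦ (c₁+1, 1, c₂+1, c₃, …, cₙ)`. -/
inductive IsQuiddity : List ℕ → Prop
  | base : IsQuiddity [0, 0]
  | dih {c d : List ℕ} : IsQuiddity c → dihStep c d → IsQuiddity d
  | grow {a b : ℕ} {t : List ℕ} : IsQuiddity (a :: b :: t) →
      IsQuiddity ((a + 1) :: 1 :: (b + 1) :: t)

/-- The (class of the) cycle `c` contains the finite sequence `d`: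
some representative of `c` has `d` as a block of consecutive entries. -/
def CycContains (c d : List ℕ) : Prop := ∃ c', DihEquiv c c' ∧ d <:+: c'

open List

namespace IsQuiddity

theorem rotate_one {c : List ℕ} (h : IsQuiddity c) : IsQuiddity (c.rotate 1) :=
  h.dih (Or.inl rfl)

theorem reverse {c : List ℕ} (h : IsQuiddity c) : IsQuiddity c.reverse :=
  h.dih (Or.inr rfl)

theorem rotate {c : List ℕ} (h : IsQuiddity c) (n : ℕ) : IsQuiddity (c.rotate n) := by
  induction n with
  | zero => simpa using h
  | succ n ih => simpa [rotate_rotate] using ih.rotate_one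

theorem of_isRotated {c d : List ℕ} (h : IsQuiddity c) (hcd : c ~r d) : IsQuiddity d := by
  obtain ⟨n, rfl⟩ := hcd
  exact h.rotate n

theorem append_comm {s t : List ℕ} (h : IsQuiddity (s ++ t)) : IsQuiddity (t ++ s) :=
  h.of_isRotated isRotated_append

theorem grow_middle {l r : List ℕ} {a b : ℕ} (h : IsQuiddity (l ++ a :: b :: r)) :
    IsQuiddity (l ++ (a + 1) :: 1 :: (b + 1) :: r) := by
  have h' : IsQuiddity (a :: b :: (r ++ l)) := by simpa using h.append_comm
  have h'' : IsQuiddity (((a + 1) :: 1 :: (b + 1) :: r) ++ l) := by simpa using h'.grow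
  exact h''.append_comm

theorem two_le_length {c : List ℕ} (h : IsQuiddity c) : 2 ≤ c.length := by
  induction h with
  | base => simp
  | dih _ hstep ih => rcases hstep with rfl | rfl <;> simpa
  | grow => simp

theorem eq_of_length_eq_two {c : List ℕ} (h : IsQuiddity c) (hc : c.length = 2) :
    c = [0, 0] := by
  induction h with
  | base => rfl
  | dih _ hstep ih =>
    rcases hstep with rfl | rfl <;> rw [ih (by simpa using hc)] <;> rfl
  | grow => simp at hc

end IsQuiddity

theorem List.IsRotated.exists_append_eq {α : Type*} {l l' : List α} (h : l ~r l') :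
    ∃ s t, l = s ++ t ∧ l' = t ++ s := by
  obtain ⟨n, hn, rfl⟩ := isRotated_iff_mod.mp h
  exact ⟨l.take n, l.drop n, (take_append_drop n l).symm, rotate_eq_drop_append_take hn⟩

/-- The stretch of a glued cycle coming from one of its two pieces: a quiddity with `α` added
to its first entry and `β` to its last. -/
def IsBumpedQuiddity (α β : ℕ) (l : List ℕ) : Prop :=
  ∃ p m q, IsQuiddity (p :: (m ++ [q])) ∧ l = (p + α) :: (m ++ [q + β])

namespace IsBumpedQuiddity

variable {α β a b : ℕ}

theorem reverse {l : List ℕ} (h : IsBumpedQuiddity α β l) : IsBumpedQuiddity β α l.reverse := by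
  obtain ⟨p, m, q, hq, rfl⟩ := h
  exact ⟨q, m.reverse, p, by simpa using hq.reverse, by simp⟩

theorem grow_head {r : List ℕ} (h : IsBumpedQuiddity α β (a :: b :: r)) :
    IsBumpedQuiddity α β ((a + 1) :: 1 :: (b + 1) :: r) := by
  obtain ⟨p, m, q, hq, he⟩ := h
  cases m with
  | nil =>
    simp only [nil_append, cons.injEq] at he
    obtain ⟨rfl, rfl, rfl⟩ := he
    exact ⟨p + 1, [1], q + 1, by simpa using hq.grow, by simp; omega⟩
  | cons x m =>
    simp only [cons_append, cons.injEq] at he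
    obtain ⟨rfl, rfl, rfl⟩ := he
    exact ⟨p + 1, 1 :: (b + 1) :: m, q, by simpa using hq.grow, by simp; omega⟩

theorem grow {s r : List ℕ} (h : IsBumpedQuiddity α β (s ++ a :: b :: r)) :
    IsBumpedQuiddity α β (s ++ (a + 1) :: 1 :: (b + 1) :: r) := by
  rcases s with _ | ⟨x, s⟩
  · exact grow_head h
  rcases eq_nil_or_concat r with rfl | ⟨r, y, rfl⟩
  · have hrev : IsBumpedQuiddity β α (b :: a :: (s.reverse ++ [x])) := by simpa using h.reverse
    simpa using hrev.grow_head.reverse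
  · obtain ⟨p, m, q, hq, he⟩ := h
    simp only [concat_eq_append, cons_append, cons.injEq] at he
    obtain ⟨rfl, he⟩ := he
    have he' : (s ++ a :: b :: r) ++ [y] = m ++ [q + β] := by simpa using he
    obtain ⟨rfl, hy⟩ := append_inj' he' rfl
    obtain rfl : y = q + β := by simpa using hy
    have hq' : IsQuiddity ((p :: s) ++ a :: b :: (r ++ [q])) := by simpa using hq
    exact ⟨p, s ++ (a + 1) :: 1 :: (b + 1) :: r, q, by simpa using hq'.grow_middle, by simp⟩

end IsBumpedQuiddity

/-- `c` is glued from the quiddities `uh :: um ++ [ul]` and `vh :: vm ++ [vl]` along a triangle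
whose vertices are the first and last entries of `c` and the entry where the two pieces meet. -/
def IsGlued (c : List ℕ) : Prop :=
  ∃ uh um ul vh vm vl, IsQuiddity (uh :: (um ++ [ul])) ∧ IsQuiddity (vh :: (vm ++ [vl])) ∧
    c = (uh + 1) :: (um ++ (ul + vh + 1) :: (vm ++ [vl + 1]))

namespace IsGlued

theorem reverse {c : List ℕ} (h : IsGlued c) : IsGlued c.reverse := by
  obtain ⟨uh, um, ul, vh, vm, vl, hu, hv, rfl⟩ := h
  refine ⟨vl, vm.reverse, vh, ul, um.reverse, uh, by simpa using hv.reverse,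
    by simpa using hu.reverse, ?_⟩
  simp only [reverse_cons, reverse_append, reverse_nil, nil_append, cons_append,
    append_assoc]
  rw [Nat.add_comm ul vh]

theorem grow_of_length_le {uh ul vh vl a b : ℕ} {um vm s r : List ℕ}
    (hu : IsQuiddity (uh :: (um ++ [ul]))) (hv : IsQuiddity (vh :: (vm ++ [vl])))
    (he : s ++ a :: b :: r = (uh + 1) :: (um ++ (ul + vh + 1) :: (vm ++ [vl + 1])))
    (hs : s.length ≤ um.length) :
    IsGlued (s ++ (a + 1) :: 1 :: (b + 1) :: r) := by
  have hB : IsBumpedQuiddity 1 (vh + 1) ((uh + 1) :: (um ++ [ul + (vh + 1)])) :=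
    ⟨uh, um, ul, hu, rfl⟩
  have he' : (s ++ [a, b]) ++ r = (uh + 1) :: (um ++ [ul + (vh + 1)]) ++ (vm ++ [vl + 1]) := by
    simpa [← Nat.add_assoc] using he
  obtain ⟨r', hBr, rfl⟩ : ∃ r', (uh + 1) :: (um ++ [ul + (vh + 1)]) = s ++ a :: b :: r' ∧
      r = r' ++ (vm ++ [vl + 1]) := by
    rcases append_eq_append_iff.mp he' with ⟨r', hBr, hr⟩ | ⟨c', hsab, hc'⟩
    · exact ⟨r', by simpa using hBr, hr⟩
    · obtain rfl : c' = [] := by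
        have := congrArg length hsab
        simp at this
        exact length_eq_zero_iff.mp (by omega)
      exact ⟨[], by simpa using hsab.symm, by simpa using hc'.symm⟩
  rw [hBr] at hB
  obtain ⟨p, m, q, hq, hpmq⟩ := hB.grow
  refine ⟨p, m, q, vh, vm, vl, hq, hv, ?_⟩
  simpa [← Nat.add_assoc] using congrArg (· ++ (vm ++ [vl + 1])) hpmq

theorem grow {s r : List ℕ} {a b : ℕ} (h : IsGlued (s ++ a :: b :: r)) :
    IsGlued (s ++ (a + 1) :: 1 :: (b + 1) :: r) := by
  obtain ⟨uh, um, ul, vh, vm, vl, hu, hv, he⟩ := h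
  rcases le_or_gt s.length um.length with hs | hs
  · exact grow_of_length_le hu hv he hs
  · -- the grown pair lies in the `v`-piece: mirror the gluing
    have he' : r.reverse ++ b :: a :: s.reverse =
        (vl + 1) :: (vm.reverse ++ (vh + ul + 1) :: (um.reverse ++ [uh + 1])) := by
      simpa [Nat.add_comm ul vh] using congrArg List.reverse he
    have hr : r.reverse.length ≤ vm.reverse.length := by
      have := congrArg length he
      simp at this ⊢
      omega
    simpa using (grow_of_length_le (by simpa using hv.reverse) (by simpa using hu.reverse)
      he' hr).reverse

end IsGlued

theorem IsQuiddity.isGlued_of_isRotated {c d : List ℕ} (h : IsQuiddity c) (hc : 3 ≤ c.length)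
    (hcd : c ~r d) : IsGlued d := by
  induction h generalizing d with
  | base => simp at hc
  | dih _ hstep ih =>
    rcases hstep with rfl | rfl
    · exact ih (by simpa using hc) ((IsRotated.forall _ 1).symm.trans hcd)
    · simpa using (ih (by simpa using hc) (isRotated_reverse_comm_iff.mp hcd)).reverse
  | @grow a b t hq ih =>
    have key : ∀ {l r : List ℕ}, a :: b :: t ~r l ++ a :: b :: r →
        IsGlued (l ++ (a + 1) :: 1 :: (b + 1) :: r) := by
      intro l r hlr
      rcases t with _ | ⟨x, t⟩
      · obtain ⟨rfl, rfl⟩ : a = 0 ∧ b = 0 := by simpa using hq.eq_of_length_eq_two rfl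
        obtain ⟨rfl, rfl⟩ : l = [] ∧ r = [] := by
          have := hlr.perm.length_eq
          simp at this
          exact ⟨length_eq_zero_iff.mp (by omega), length_eq_zero_iff.mp (by omega)⟩
        exact ⟨0, [], 0, 0, [], 0, .base, .base, rfl⟩
      · exact (ih (by simp) hlr).grow
    have hq' : IsQuiddity (b :: (t ++ [a])) := by simpa using hq.rotate_one
    obtain ⟨s, s', hs, rfl⟩ := hcd.exists_append_eq
    rcases s with _ | ⟨x₁, _ | ⟨x₂, _ | ⟨x₃, s⟩⟩⟩
    · simp only [nil_append] at hs
      subst hs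
      simpa using key (l := []) (r := t) (IsRotated.refl _)
    · simp only [singleton_append, cons.injEq] at hs
      obtain ⟨rfl, rfl⟩ := hs
      exact ⟨0, [], 0, b, t, a, .base, hq', by simp⟩
    · simp only [cons_append, nil_append, cons.injEq] at hs
      obtain ⟨rfl, rfl, rfl⟩ := hs
      exact ⟨b, t, a, 0, [], 0, hq', .base, by simp⟩
    · simp only [cons_append, cons.injEq] at hs
      obtain ⟨rfl, rfl, rfl, rfl⟩ := hs
      exact key (by simpa using isRotated_append (l := a :: b :: s) (l' := s'))

def exceptionalQuiddities : List (List ℕ) :=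
  [[0, 0], [1, 1, 1], [1, 2, 1, 2], [2, 1, 2, 1], [2, 1, 3, 1, 2]]

def ContainsMiddlePattern (m : List ℕ) : Prop :=
  ∃ f ∈ ([[1,2,2], [1,2,3], [1,2,4], [2,1,3], [2,1,4],
          [2,1,5], [3,1,4], [3,1,5], [1,3,1,3]] : List (List ℕ)),
    f <:+: m ∨ f <:+: m.reverse

instance : DecidablePred ContainsMiddlePattern := fun m => by
  unfold ContainsMiddlePattern; infer_instance

theorem ContainsMiddlePattern.mono {m m' : List ℕ} (h : ContainsMiddlePattern m)
    (hm : m <:+: m') : ContainsMiddlePattern m' := by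
  obtain ⟨f, hf, hfm | hfm⟩ := h
  exacts [⟨f, hf, .inl (hfm.trans hm)⟩, ⟨f, hf, .inr (hfm.trans (reverse_infix.mpr hm))⟩]

def IsExceptionalOrPatterned (c : List ℕ) : Prop :=
  c ∈ exceptionalQuiddities ∨ ContainsMiddlePattern (c.drop 1).dropLast

instance : DecidablePred IsExceptionalOrPatterned := fun c => by
  unfold IsExceptionalOrPatterned; infer_instance

theorem isExceptionalOrPatterned_glue_of_mem {uh ul vh vl : ℕ} {um vm : List ℕ}
    (hu : uh :: (um ++ [ul]) ∈ exceptionalQuiddities)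
    (hv : vh :: (vm ++ [vl]) ∈ exceptionalQuiddities) :
    IsExceptionalOrPatterned ((uh + 1) :: (um ++ (ul + vh + 1) :: (vm ++ [vl + 1]))) := by
  have hall : ∀ u ∈ exceptionalQuiddities, ∀ v ∈ exceptionalQuiddities,
      IsExceptionalOrPatterned ((u.headD 0 + 1) :: (u.tail.dropLast ++
        (u.reverse.headD 0 + v.headD 0 + 1) :: (v.tail.dropLast ++ [v.reverse.headD 0 + 1]))) := by
    decide
  simpa using hall _ hu _ hv

theorem IsQuiddity.isExceptionalOrPatterned {c : List ℕ} (h : IsQuiddity c) :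
    IsExceptionalOrPatterned c := by
  rcases h.two_le_length.eq_or_lt with h2 | h3
  · rw [h.eq_of_length_eq_two h2.symm]
    decide
  obtain ⟨uh, um, ul, vh, vm, vl, hu, hv, hc⟩ := h.isGlued_of_isRotated h3 (IsRotated.refl c)
  have hmid : (c.drop 1).dropLast = um ++ (ul + vh + 1) :: vm := by
    rw [hc, drop_one, tail_cons, ← dropLast_concat (l₁ := um ++ (ul + vh + 1) :: vm) (b := vl + 1)]
    simp
  rcases hu.isExceptionalOrPatterned with hu' | hu'
  · rcases hv.isExceptionalOrPatterned with hv' | hv'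
    · exact hc ▸ isExceptionalOrPatterned_glue_of_mem hu' hv'
    · refine .inr (hmid ▸ hv'.mono ?_)
      simpa using infix_append (um ++ [ul + vh + 1]) vm []
  · refine .inr (hmid ▸ hu'.mono ?_)
    simpa using infix_append [] um ((ul + vh + 1) :: vm)
termination_by c.length
decreasing_by all_goals simp [hc]

/-- If `c = (c₁,…,cₙ)` represents a quiddity cycle, then either `c` is one of
five explicit sequences, or `(c₂,…,cₙ₋₁)` or `(cₙ₋₁,…,c₂)` contains one of nine
explicit sequences as a block of consecutive entries. -/
theorem quiddity_middle_subsequences (c : List ℕ) (hc : IsQuiddity c) :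
    c = [0, 0] ∨ c = [1, 1, 1] ∨ c = [1, 2, 1, 2] ∨ c = [2, 1, 2, 1] ∨
    c = [2, 1, 3, 1, 2] ∨
    ∃ f ∈ ([[1,2,2], [1,2,3], [1,2,4], [2,1,3], [2,1,4],
            [2,1,5], [3,1,4], [3,1,5], [1,3,1,3]] : List (List ℕ)),
      f <:+: (c.drop 1).dropLast ∨ f <:+: ((c.drop 1).dropLast).reverse := by
  rcases hc.isExceptionalOrPatterned with hexc | hpat
  · simp only [exceptionalQuiddities, mem_cons, not_mem_nil, or_false] at hexc
    tauto
  · exact .inr <| .inr <| .inr <| .inr <| .inr hpat
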